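/- One has the power series identity 32K(r) − 32E(r) − 14r²K(r) − 3r⁴K(r) − 2r²E(r) = (3π/2) Σ_{n=3}^{∞} [n(5n−6)(n−1)(n−2) ((1/2)_{n−2})² / (n!)²] r^{2n} for r ∈ (0,1), where (a)_n is the Pochhammer symbol. -/

import Mathlib

/-!
Expanding the integrands by the binomial series `(1 - x)^(-a) = ∑ (a)ₙ/n! xⁿ` at
`x = r² sin² t` and integrating term by term with Wallis' formula
`∫₀^{π/2} sin^{2n} t dt = (π/2) (1/2)ₙ/n!` gives the power series of `K` and `E`. In the
combination on the left the coefficients of `r⁰` and `r²` cancel, and by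
`(a)ₙ₊₁ = (a)ₙ (a + n)` and `(-1/2)ₙ₊₁ = -(1/2) (1/2)ₙ` the coefficient of `r^{2(n+2)}`
becomes a rational function of `n` times `((1/2)ₙ/n!)²`.
-/

open Real

/-- Rising factorial (Pochhammer symbol) of a real number. -/
noncomputable def poch (a : ℝ) (n : ℕ) : ℝ := ∏ i ∈ Finset.range n, (a + i)

/-- Complete elliptic integral of the first kind. -/
noncomputable def ellipticK (r : ℝ) : ℝ :=
  ∫ t in (0:ℝ)..(π / 2), 1 / Real.sqrt (1 - r ^ 2 * Real.sin t ^ 2)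

/-- Complete elliptic integral of the second kind. -/
noncomputable def ellipticE (r : ℝ) : ℝ :=
  ∫ t in (0:ℝ)..(π / 2), Real.sqrt (1 - r ^ 2 * Real.sin t ^ 2)

open MeasureTheory

noncomputable def pochCoeff (a : ℝ) (n : ℕ) : ℝ := poch a n / n.factorial

lemma poch_zero (a : ℝ) : poch a 0 = 1 := by simp [poch]

lemma poch_succ_right (a : ℝ) (n : ℕ) : poch a (n + 1) = poch a n * (a + n) :=
  Finset.prod_range_succ _ n

lemma poch_succ_left (a : ℝ) (n : ℕ) : poch a (n + 1) = a * poch (a + 1) n := by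
  simp only [poch, Finset.prod_range_succ', Nat.cast_add, Nat.cast_one, Nat.cast_zero, add_zero]
  rw [mul_comm]
  congr 1
  exact Finset.prod_congr rfl fun i _ => by ring

lemma poch_eq_ascPochhammer_eval (a : ℝ) (n : ℕ) : poch a n = (ascPochhammer ℝ n).eval a := by
  induction n with
  | zero => simp [poch_zero]
  | succ n ih => rw [poch_succ_right, ascPochhammer_succ_eval, ih]

lemma ring_choose_eq_pochCoeff (a : ℝ) (n : ℕ) : Ring.choose (a + n - 1) n = pochCoeff a n := by
  have h := Ring.factorial_nsmul_multichoose_eq_ascPochhammer a n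
  rw [Ring.multichoose_eq, nsmul_eq_mul, Polynomial.ascPochhammer_smeval_eq_eval,
    ← poch_eq_ascPochhammer_eval] at h
  rw [pochCoeff, ← h, mul_div_cancel_left₀ _ (by positivity)]

lemma pochCoeff_zero (a : ℝ) : pochCoeff a 0 = 1 := by simp [pochCoeff, poch_zero]

lemma pochCoeff_one (a : ℝ) : pochCoeff a 1 = a := by simp [pochCoeff, poch]

lemma pochCoeff_succ (a : ℝ) (n : ℕ) :
    pochCoeff a (n + 1) = pochCoeff a n * (a + n) / (n + 1) := by
  rw [pochCoeff, pochCoeff, poch_succ_right, Nat.factorial_succ, Nat.cast_mul]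
  push_cast
  field_simp

lemma pochCoeff_succ_left (a : ℝ) (n : ℕ) :
    pochCoeff a (n + 1) = a * pochCoeff (a + 1) n / (n + 1) := by
  rw [pochCoeff, pochCoeff, poch_succ_left, Nat.factorial_succ, Nat.cast_mul]
  push_cast
  field_simp

theorem hasFPowerSeriesOnBall_one_div_one_sub_rpow (a : ℝ) :
    HasFPowerSeriesOnBall (fun x ↦ 1 / (1 - x) ^ a)
      (.ofScalars ℝ (pochCoeff a)) 0 1 := by
  convert Real.one_div_one_sub_rpow_hasFPowerSeriesOnBall_zero a using 2
  exact funext fun n => (ring_choose_eq_pochCoeff a n).symm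

lemma hasSum_pochCoeff_mul_pow (a : ℝ) {x : ℝ} (hx : |x| < 1) :
    HasSum (fun n => pochCoeff a n * x ^ n) (1 / (1 - x) ^ a) := by
  have h := (hasFPowerSeriesOnBall_one_div_one_sub_rpow a).hasSum
    (y := x) (by simpa [Metric.mem_eball, edist_dist] using hx)
  simpa [FormalMultilinearSeries.ofScalars_apply_eq, mul_comm] using h

lemma summable_norm_pochCoeff_mul_pow (a : ℝ) {ρ : ℝ} (hρ : 0 ≤ ρ) (hρ1 : ρ < 1) :
    Summable (fun n => ‖pochCoeff a n‖ * ρ ^ n) := by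
  lift ρ to NNReal using hρ
  have h := (FormalMultilinearSeries.ofScalars ℝ (pochCoeff a)).summable_norm_mul_pow
    (lt_of_lt_of_le (by exact_mod_cast hρ1) (hasFPowerSeriesOnBall_one_div_one_sub_rpow a).r_le)
  simpa [FormalMultilinearSeries.ofScalars_norm] using h

lemma hasSum_one_div_sqrt_one_sub {x : ℝ} (hx : |x| < 1) :
    HasSum (fun n => pochCoeff (1 / 2) n * x ^ n) (1 / √(1 - x)) := by
  rw [sqrt_eq_rpow]
  exact hasSum_pochCoeff_mul_pow _ hx

lemma hasSum_sqrt_one_sub {x : ℝ} (hx : |x| < 1) :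
    HasSum (fun n => pochCoeff (-1 / 2) n * x ^ n) (√(1 - x)) := by
  have h1x : 0 ≤ 1 - x := by linarith [le_abs_self x]
  convert hasSum_pochCoeff_mul_pow (-1 / 2) hx using 1
  rw [show (-1 / 2 : ℝ) = -(1 / 2) by ring, rpow_neg h1x, one_div, inv_inv, sqrt_eq_rpow]

theorem integral_sin_pow_even_pi_div_two (n : ℕ) :
    ∫ t in 0..π / 2, sin t ^ (2 * n) = π / 2 * pochCoeff (1 / 2) n := by
  induction n with
  | zero => simp [pochCoeff_zero]
  | succ n ih =>
    rw [show 2 * (n + 1) = 2 * n + 2 by ring, integral_sin_pow, ih, pochCoeff_succ]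
    simp only [cos_pi_div_two, sin_zero, mul_zero, zero_pow (Nat.succ_ne_zero _), sub_zero]
    push_cast
    field_simp
    ring

theorem hasSum_integral_comp_mul_sin_sq {c : ℕ → ℝ} {G : ℝ → ℝ} {ρ : ℝ} (hρ : 0 ≤ ρ)
    (hc : Summable fun n => ‖c n‖ * ρ ^ n)
    (hG : ∀ x ∈ Set.Icc 0 ρ, HasSum (fun n => c n * x ^ n) (G x)) :
    HasSum (fun n => π / 2 * (c n * pochCoeff (1 / 2) n) * ρ ^ n)
      (∫ t in 0..π / 2, G (ρ * sin t ^ 2)) := by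
  have hmem (t : ℝ) : ρ * sin t ^ 2 ∈ Set.Icc 0 ρ :=
    ⟨by positivity, mul_le_of_le_one_right hρ (sin_sq_le_one t)⟩
  have h := intervalIntegral.hasSum_integral_of_dominated_convergence (μ := volume)
    (a := 0) (b := π / 2)
    (F := fun n t => c n * (ρ * sin t ^ 2) ^ n) (fun n _ => ‖c n‖ * ρ ^ n)
    (fun n => (by fun_prop : Continuous _).aestronglyMeasurable)
    (fun n => ae_of_all _ fun t _ => by
      rw [norm_mul, norm_pow, Real.norm_of_nonneg (hmem t).1]
      gcongr
      exact (hmem t).2)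
    (ae_of_all _ fun _ _ => hc) intervalIntegrable_const
    (ae_of_all _ fun t _ => hG _ (hmem t))
  refine h.congr_fun fun n => ?_
  simp_rw [mul_pow, ← pow_mul]
  rw [intervalIntegral.integral_const_mul, intervalIntegral.integral_const_mul,
    integral_sin_pow_even_pi_div_two]
  ring

theorem hasSum_ellipticK {r : ℝ} (hr : |r| < 1) :
    HasSum (fun n => π / 2 * pochCoeff (1 / 2) n ^ 2 * r ^ (2 * n)) (ellipticK r) := by
  have hr2 : r ^ 2 < 1 := (sq_lt_one_iff_abs_lt_one r).mpr hr
  rw [ellipticK]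
  convert hasSum_integral_comp_mul_sin_sq (sq_nonneg r)
    (summable_norm_pochCoeff_mul_pow _ (sq_nonneg r) hr2)
    (fun x hx => hasSum_one_div_sqrt_one_sub ((abs_of_nonneg hx.1).trans_lt (hx.2.trans_lt hr2)))
    using 2 with n
  rw [pow_mul]; ring

theorem hasSum_ellipticE {r : ℝ} (hr : |r| < 1) :
    HasSum (fun n => π / 2 * (pochCoeff (-1 / 2) n * pochCoeff (1 / 2) n) * r ^ (2 * n))
      (ellipticE r) := by
  have hr2 : r ^ 2 < 1 := (sq_lt_one_iff_abs_lt_one r).mpr hr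
  rw [ellipticE]
  convert hasSum_integral_comp_mul_sin_sq (sq_nonneg r)
    (summable_norm_pochCoeff_mul_pow _ (sq_nonneg r) hr2)
    (fun x hx => hasSum_sqrt_one_sub ((abs_of_nonneg hx.1).trans_lt (hx.2.trans_lt hr2)))
    using 2 with n
  rw [pow_mul]

lemma pochCoeff_neg_half_succ (n : ℕ) :
    pochCoeff (-1 / 2) (n + 1) = -pochCoeff (1 / 2) n / (2 * (n + 1)) := by
  rw [pochCoeff_succ_left, show (-1 / 2 : ℝ) + 1 = 1 / 2 by norm_num]
  field_simp

lemma f5_series_coeff (n : ℕ) :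
    32 * pochCoeff (1 / 2) (n + 2) ^ 2
        - 32 * (pochCoeff (-1 / 2) (n + 2) * pochCoeff (1 / 2) (n + 2))
        - 14 * pochCoeff (1 / 2) (n + 1) ^ 2 - 3 * pochCoeff (1 / 2) n ^ 2
        - 2 * (pochCoeff (-1 / 2) (n + 1) * pochCoeff (1 / 2) (n + 1))
      = 3 * (((n + 2 : ℕ) : ℝ) * (5 * ((n + 2 : ℕ) : ℝ) - 6) * (((n + 2 : ℕ) : ℝ) - 1)
          * (((n + 2 : ℕ) : ℝ) - 2) * poch (1 / 2) (n + 2 - 2) ^ 2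
          / (((n + 2).factorial : ℝ)) ^ 2) := by
  rw [Nat.add_sub_cancel, pochCoeff_neg_half_succ, pochCoeff_neg_half_succ,
    pochCoeff_succ _ (n + 1), pochCoeff_succ, pochCoeff, Nat.factorial_succ, Nat.factorial_succ]
  push_cast
  field_simp
  ring

theorem f5_series (r : ℝ) (hr : r ∈ Set.Ioo (0:ℝ) 1) :
    32 * ellipticK r - 32 * ellipticE r - 14 * r ^ 2 * ellipticK r
        - 3 * r ^ 4 * ellipticK r - 2 * r ^ 2 * ellipticE r
      = (3 * π / 2) *
        ∑' n : ℕ,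
          ((n : ℝ) * (5 * (n : ℝ) - 6) * ((n : ℝ) - 1) * ((n : ℝ) - 2) *
              (poch (1 / 2) (n - 2)) ^ 2 / ((n.factorial : ℝ)) ^ 2) * r ^ (2 * n) := by
  have hr' : |r| < 1 := abs_lt.mpr ⟨by linarith [hr.1], hr.2⟩
  have hK := hasSum_ellipticK hr'
  have hE := hasSum_ellipticE hr'
  have hsum := ((((((hasSum_nat_add_iff' 2).mpr hK).mul_left 32).sub
      (((hasSum_nat_add_iff' 2).mpr hE).mul_left 32)).sub
      (((hasSum_nat_add_iff' 1).mpr hK).mul_left (14 * r ^ 2))).sub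
      (hK.mul_left (3 * r ^ 4))).sub (((hasSum_nat_add_iff' 1).mpr hE).mul_left (2 * r ^ 2))
  rw [← tsum_mul_left]
  refine (HasSum.tsum_eq ?_).symm
  rw [← hasSum_nat_add_iff' 2]
  convert hsum using 1
  · funext n
    linear_combination (-(π / 2 * r ^ (2 * (n + 2)))) * f5_series_coeff n
  · simp only [Finset.sum_range_succ, Finset.sum_range_zero, pochCoeff_zero, pochCoeff_one,
      Nat.cast_zero, Nat.cast_one]
    ring
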